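/- arXiv:1903.00244 — 3 statements merged into one kernel-verified Lean document; each statement's English description precedes it below -/
import Mathlib

section
/- The Hamiltonians H = (H_i)_{i∈𝕀} defined by H_i(x,p) = max_{ξ∈Ξ}[−g_i(x,ξ)·p − L_i(x,ξ)] satisfy the coercivity condition (C) — for each i∈𝕀, min_{x∈𝕋ⁿ} H_i(x,p) → ∞ as |p| → ∞ — if and only if there exists δ > 0 such that the open ball B_δ of radius δ centered at the origin of ℝⁿ satisfies B_δ ⊆ conv{g_i(x,ξ) : ξ∈Ξ} for every (x,i) ∈ 𝕋ⁿ×𝕀, where conv denotes the convex hull. -/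
open MeasureTheory Filter Topology RealInnerProductSpace

noncomputable section

/-- Euclidean space ℝⁿ, the universal cover of the flat torus 𝕋ⁿ = ℝⁿ/ℤⁿ. -/
abbrev Euc (n : ℕ) := EuclideanSpace ℝ (Fin n)

/-- A vector of ℝⁿ with integer coordinates (an element of ℤⁿ). -/
def IsIntVec {n : ℕ} (z : Euc n) : Prop := ∀ i, ∃ k : ℤ, z i = (k : ℝ)

/-- ℤⁿ-periodic functions on ℝⁿ: these represent functions on the torus 𝕋ⁿ. -/
def TorusFun {n : ℕ} {α : Type*} (f : Euc n → α) : Prop :=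
  ∀ (x z : Euc n), IsIntVec z → f (x + z) = f x

/-- Functions on 𝕋ⁿ × Ξ, i.e. ℤⁿ-periodic in the first variable. -/
def TorusFun2 {n : ℕ} {Ξ : Type*} {α : Type*} (f : Euc n × Ξ → α) : Prop :=
  ∀ (x z : Euc n) (ξ : Ξ), IsIntVec z → f (x + z, ξ) = f (x, ξ)

/-- The Hamiltonian H_{φ,i}(x,p) = sup_{ξ∈Ξ} (−g_i(x,ξ)·p − φ_i(x,ξ)). -/
def ham {n m : ℕ} {Ξ : Type*} (g : Fin m → Euc n × Ξ → Euc n)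
    (φ : Fin m → Euc n × Ξ → ℝ) (i : Fin m) (x p : Euc n) : ℝ :=
  ⨆ ξ : Ξ, (-⟪g i (x, ξ), p⟫ - φ i (x, ξ))

/-- The data g = (g_i), L = (L_i) consist of continuous functions on 𝕋ⁿ × Ξ. -/
def GoodData {n m : ℕ} {Ξ : Type*} [TopologicalSpace Ξ]
    (g : Fin m → Euc n × Ξ → Euc n) (L : Fin m → Euc n × Ξ → ℝ) : Prop :=
  (∀ i, Continuous (g i) ∧ TorusFun2 (g i)) ∧ (∀ i, Continuous (L i) ∧ TorusFun2 (L i))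

/-- Coercivity (C): min_{x∈𝕋ⁿ} H_i(x,p) → ∞ as |p| → ∞. -/
def Coercive {n m : ℕ} {Ξ : Type*} (g : Fin m → Euc n × Ξ → Euc n)
    (L : Fin m → Euc n × Ξ → ℝ) : Prop :=
  ∀ (i : Fin m) (M : ℝ), ∃ R : ℝ, ∀ p : Euc n, R ≤ ‖p‖ → ∀ x : Euc n, M ≤ ham g L i x p

/-- A monotone m×m real matrix. -/
def IsMonotoneMat {m : ℕ} (B : Matrix (Fin m) (Fin m) ℝ) : Prop :=
  ∀ (u : Fin m → ℝ) (k : Fin m), (∀ i, u i ≤ u k) → 0 ≤ u k → 0 ≤ ∑ j, B k j * u j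

/-- Assumption (M): B(x) has continuous entries (as functions on 𝕋ⁿ) and is monotone
for every x. -/
def GoodCoupling {n m : ℕ} (B : Euc n → Matrix (Fin m) (Fin m) ℝ) : Prop :=
  (∀ i j, Continuous (fun x => B x i j) ∧ TorusFun (fun x => B x i j)) ∧
    ∀ x, IsMonotoneMat (B x)

/-- Viscosity subsolution of λu + Bu + H_φ[u] = c in 𝕋ⁿ. -/
def IsSubsol {n m : ℕ} {Ξ : Type*} (B : Euc n → Matrix (Fin m) (Fin m) ℝ) (lam : ℝ)
    (g : Fin m → Euc n × Ξ → Euc n) (φ : Fin m → Euc n × Ξ → ℝ)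
    (c : Fin m → ℝ) (u : Fin m → Euc n → ℝ) : Prop :=
  (∀ i, UpperSemicontinuous (u i) ∧ TorusFun (u i)) ∧
    ∀ (i : Fin m) (ψ : Euc n → ℝ), ContDiff ℝ 1 ψ → TorusFun ψ →
      ∀ x : Euc n, IsLocalMax (fun y => u i y - ψ y) x →
        lam * u i x + (∑ j, B x i j * u j x) + ham g φ i x (gradient ψ x) ≤ c i

/-- Viscosity supersolution of λu + Bu + H_φ[u] = c in 𝕋ⁿ. -/
def IsSupersol {n m : ℕ} {Ξ : Type*} (B : Euc n → Matrix (Fin m) (Fin m) ℝ) (lam : ℝ)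
    (g : Fin m → Euc n × Ξ → Euc n) (φ : Fin m → Euc n × Ξ → ℝ)
    (c : Fin m → ℝ) (u : Fin m → Euc n → ℝ) : Prop :=
  (∀ i, LowerSemicontinuous (u i) ∧ TorusFun (u i)) ∧
    ∀ (i : Fin m) (ψ : Euc n → ℝ), ContDiff ℝ 1 ψ → TorusFun ψ →
      ∀ x : Euc n, IsLocalMin (fun y => u i y - ψ y) x →
        c i ≤ lam * u i x + (∑ j, B x i j * u j x) + ham g φ i x (gradient ψ x)

/-- Viscosity solution of λu + Bu + H_φ[u] = c in 𝕋ⁿ. -/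
def IsSol {n m : ℕ} {Ξ : Type*} (B : Euc n → Matrix (Fin m) (Fin m) ℝ) (lam : ℝ)
    (g : Fin m → Euc n × Ξ → Euc n) (φ : Fin m → Euc n × Ξ → ℝ)
    (c : Fin m → ℝ) (u : Fin m → Euc n → ℝ) : Prop :=
  (∀ i, Continuous (u i)) ∧ IsSubsol B lam g φ c u ∧ IsSupersol B lam g φ c u

/-- (φ,u) ∈ F(λ): φ ∈ C(𝕋ⁿ×Ξ)ᵐ, u ∈ C(𝕋ⁿ)ᵐ and u is a viscosity subsolution of
B^λ u + H_φ[u] = 0 in 𝕋ⁿ. -/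
def memF {n m : ℕ} {Ξ : Type*} [TopologicalSpace Ξ]
    (B : Euc n → Matrix (Fin m) (Fin m) ℝ) (lam : ℝ)
    (g : Fin m → Euc n × Ξ → Euc n)
    (φ : Fin m → Euc n × Ξ → ℝ) (u : Fin m → Euc n → ℝ) : Prop :=
  (∀ i, Continuous (φ i) ∧ TorusFun2 (φ i)) ∧ (∀ i, Continuous (u i)) ∧
    IsSubsol B lam g φ (fun _ => 0) u

/-- ρ_i(x) = Σ_j b_{ij}(x). -/
def rhoB {n m : ℕ} (B : Euc n → Matrix (Fin m) (Fin m) ℝ) (i : Fin m) (x : Euc n) : ℝ :=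
  ∑ j, B x i j

/-- ν ∈ P_{B^λ}: a family of finite nonnegative Borel measures with ⟨ν, B^λ1⟩ = 1. -/
def memPB {n m : ℕ} {Ξ : Type*} [MeasurableSpace Ξ]
    (B : Euc n → Matrix (Fin m) (Fin m) ℝ) (lam : ℝ)
    (ν : Fin m → Measure (Euc n × Ξ)) : Prop :=
  (∀ i, IsFiniteMeasure (ν i)) ∧
    (∑ i, ∫ q, (lam + rhoB B i q.1) ∂(ν i)) = 1

/-- ν ∈ G'(z,k,λ): ν ∈ P_{B^λ} and ⟨ν, φ − u_k(z) B^λ1⟩ ≥ 0 for every (φ,u) ∈ F(λ). -/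
def memGP {n m : ℕ} {Ξ : Type*} [TopologicalSpace Ξ] [MeasurableSpace Ξ]
    (B : Euc n → Matrix (Fin m) (Fin m) ℝ) (lam : ℝ)
    (g : Fin m → Euc n × Ξ → Euc n) (z : Euc n) (k : Fin m)
    (ν : Fin m → Measure (Euc n × Ξ)) : Prop :=
  memPB B lam ν ∧
    ∀ φ u, memF B lam g φ u →
      0 ≤ ∑ i, ∫ q, (φ i q - u k z * (lam + rhoB B i q.1)) ∂(ν i)

/-- μ ∈ P: a family of nonnegative Borel measures of total mass 1. -/
def memP {n m : ℕ} {Ξ : Type*} [MeasurableSpace Ξ]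
    (μ : Fin m → Measure (Euc n × Ξ)) : Prop :=
  (∀ i, IsFiniteMeasure (μ i)) ∧ (∑ i, (μ i Set.univ).toReal) = 1

/-- μ ∈ P(z,k,λ): μ ∈ P and Σ_i ⟨μ_i, (λ+ρ_i)⁻¹ φ_i⟩ ≥ u_k(z) for all (φ,u) ∈ F(λ). -/
def memPzk {n m : ℕ} {Ξ : Type*} [TopologicalSpace Ξ] [MeasurableSpace Ξ]
    (B : Euc n → Matrix (Fin m) (Fin m) ℝ) (lam : ℝ)
    (g : Fin m → Euc n × Ξ → Euc n) (z : Euc n) (k : Fin m)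
    (μ : Fin m → Measure (Euc n × Ξ)) : Prop :=
  memP μ ∧
    ∀ φ u, memF B lam g φ u →
      u k z ≤ ∑ i, ∫ q, (lam + rhoB B i q.1)⁻¹ * φ i q ∂(μ i)

/-- μ ∈ P(0): μ ∈ P and ⟨μ,φ⟩ ≥ 0 for all (φ,u) ∈ F(0). -/
def memP0 {n m : ℕ} {Ξ : Type*} [TopologicalSpace Ξ] [MeasurableSpace Ξ]
    (B : Euc n → Matrix (Fin m) (Fin m) ℝ)
    (g : Fin m → Euc n × Ξ → Euc n)
    (μ : Fin m → Measure (Euc n × Ξ)) : Prop :=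
  memP μ ∧ ∀ φ u, memF B 0 g φ u → 0 ≤ ∑ i, ∫ q, φ i q ∂(μ i)

/-- μ ∈ M₊(0): a family of finite nonnegative Borel measures with ⟨μ,φ⟩ ≥ 0 for all
(φ,u) ∈ F(0). -/
def memM0 {n m : ℕ} {Ξ : Type*} [TopologicalSpace Ξ] [MeasurableSpace Ξ]
    (B : Euc n → Matrix (Fin m) (Fin m) ℝ)
    (g : Fin m → Euc n × Ξ → Euc n)
    (μ : Fin m → Measure (Euc n × Ξ)) : Prop :=
  (∀ i, IsFiniteMeasure (μ i)) ∧ ∀ φ u, memF B 0 g φ u → 0 ≤ ∑ i, ∫ q, φ i q ∂(μ i)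

/-- Assumption (E): problem (P₀) has a Lipschitz continuous viscosity solution. -/
def AssumptionE {n m : ℕ} {Ξ : Type*} (B : Euc n → Matrix (Fin m) (Fin m) ℝ)
    (g : Fin m → Euc n × Ξ → Euc n) (L : Fin m → Euc n × Ξ → ℝ) : Prop :=
  ∃ v₀ : Fin m → Euc n → ℝ, (∀ i, ∃ K : NNReal, LipschitzWith K (v₀ i)) ∧
    IsSol B 0 g L (fun _ => 0) v₀

end

/-!
Write `σ_{x,i}(p) = max_ξ (-g_i(x,ξ)·p)`. Since `L` is continuous and periodic it is bounded, so
`H_i(x,p)` stays within a fixed distance of `σ_{x,i}(p)`, and (C) is equivalent to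
`σ_{x,i}(p) → ∞` uniformly in `(x,i)`. As `σ_{x,i}` is positively homogeneous, this means
`σ_{x,i}(p) ≥ δ|p|` for some `δ > 0`. Finally `σ_{x,i}(p)` is the support function of the compact
convex set `K = conv{g_i(x,ξ)}` evaluated at `-p`, and by Hahn–Banach `σ_{x,i} ≥ δ|·|` holds exactly
when `B_δ ⊆ K`.
-/

open Set Metric

section ConvexHull

variable {E : Type*} [NormedAddCommGroup E] [NormedSpace ℝ E] [FiniteDimensional ℝ E]

/-- Carathéodory's theorem with exactly `finrank + 1` points: the slots not used by an affinely
independent representation get weight `0` and an arbitrary point of `s`. -/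
theorem exists_mem_stdSimplex_sum_smul_eq_of_mem_convexHull {s : Set E} (hs : s.Nonempty) {x : E}
    (hx : x ∈ convexHull ℝ s) :
    ∃ w ∈ stdSimplex ℝ (Fin (Module.finrank ℝ E + 1)),
      ∃ z : Fin (Module.finrank ℝ E + 1) → E, (∀ j, z j ∈ s) ∧ ∑ j, w j • z j = x := by
  obtain ⟨x₀, hx₀⟩ := hs
  obtain ⟨ι, _, z, w, hzs, hai, hw₀, hw₁, rfl⟩ := eq_pos_convex_span_of_mem_convexHull hx
  obtain ⟨e⟩ : Nonempty (ι ↪ Fin (Module.finrank ℝ E + 1)) :=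
    Function.Embedding.nonempty_of_card_le <| by
      simpa using hai.card_le_finrank_succ.trans (Nat.succ_le_succ (Submodule.finrank_le _))
  have hextend_zero : ∀ j ∉ range e, Function.extend e w 0 j = 0 := fun j hj =>
    Function.extend_apply' _ _ _ hj
  refine ⟨Function.extend e w 0, ⟨fun j => ?_, ?_⟩, Function.extend e z fun _ => x₀,
    fun j => ?_, ?_⟩
  · by_cases hj : j ∈ range e
    · obtain ⟨i, rfl⟩ := hj
      rw [e.injective.extend_apply]
      exact (hw₀ i).le
    · rw [hextend_zero j hj]
  · rw [← hw₁]
    exact (Fintype.sum_of_injective e e.injective w _ hextend_zero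
      fun i => (e.injective.extend_apply _ _ i).symm).symm
  · by_cases hj : j ∈ range e
    · obtain ⟨i, rfl⟩ := hj
      rw [e.injective.extend_apply]
      exact hzs ⟨i, rfl⟩
    · rwa [Function.extend_apply' _ _ _ hj]
  · refine (Fintype.sum_of_injective e e.injective _ _ (fun j hj => ?_) fun i => ?_).symm
    · rw [hextend_zero j hj, zero_smul]
    · simp only [e.injective.extend_apply]

theorem isCompact_convexHull {s : Set E} (hs : IsCompact s) : IsCompact (convexHull ℝ s) := by
  rcases s.eq_empty_or_nonempty with rfl | hne
  · simp
  have hhull : convexHull ℝ s = (fun p : (Fin _ → ℝ) × (Fin _ → E) => ∑ j, p.1 j • p.2 j) ''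
      (stdSimplex ℝ (Fin (Module.finrank ℝ E + 1)) ×ˢ univ.pi fun _ => s) := by
    ext x
    constructor
    · intro hx
      obtain ⟨w, hw, z, hz, rfl⟩ := exists_mem_stdSimplex_sum_smul_eq_of_mem_convexHull hne hx
      exact ⟨(w, z), ⟨hw, fun j _ => hz j⟩, rfl⟩
    · rintro ⟨⟨w, z⟩, ⟨hw, hz⟩, rfl⟩
      exact mem_convexHull_of_exists_fintype w z hw.1 hw.2 (fun j => hz j trivial) rfl
  rw [hhull]
  exact ((isCompact_stdSimplex _ _).prod (isCompact_univ_pi fun _ => hs)).image (by fun_prop)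

end ConvexHull

section SupportFunction

variable {ι E : Type*} [NormedAddCommGroup E] [InnerProductSpace ℝ E]

theorem iSup_neg_inner_smul (v : ι → E) (p : E) {t : ℝ} (ht : 0 ≤ t) :
    ⨆ i, -⟪v i, t • p⟫ = t * ⨆ i, -⟪v i, p⟫ := by
  simp_rw [real_inner_smul_right, ← mul_neg]
  exact (Real.mul_iSup_of_nonneg ht _).symm

theorem bddAbove_range_neg_inner {v : ι → E} (hv : IsCompact (convexHull ℝ (range v))) (p : E) :
    BddAbove (range fun i => -⟪v i, p⟫) :=
  (hv.image (continuous_id.inner continuous_const).neg).bddAbove.mono <| by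
    rintro _ ⟨i, rfl⟩
    exact ⟨v i, subset_convexHull ℝ _ ⟨i, rfl⟩, rfl⟩

theorem ball_subset_convexHull_range_iff [CompleteSpace E] [Nonempty ι] {v : ι → E}
    (hv : IsCompact (convexHull ℝ (range v))) {δ : ℝ} (hδ : 0 < δ) :
    ball 0 δ ⊆ convexHull ℝ (range v) ↔ ∀ p, δ * ‖p‖ ≤ ⨆ i, -⟪v i, p⟫ := by
  constructor
  · intro hball p
    rcases eq_or_ne p 0 with rfl | hp
    · simp
    have hclosedBall : closedBall 0 δ ⊆ convexHull ℝ (range v) := by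
      rw [← closure_ball _ hδ.ne']
      exact hv.isClosed.closure_subset_iff.mpr hball
    have hhalf : convexHull ℝ (range v) ⊆ {y | -⟪y, p⟫ ≤ ⨆ i, -⟪v i, p⟫} := by
      refine convexHull_min ?_ ?_
      · rintro _ ⟨i, rfl⟩
        exact le_ciSup (bddAbove_range_neg_inner hv p) i
      · exact convex_halfSpace_le ⟨fun y z => by rw [inner_add_left, neg_add],
          fun c y => by rw [real_inner_smul_left, smul_eq_mul, mul_neg]⟩ _
    set w : E := -(δ / ‖p‖) • p
    have hw : w ∈ closedBall 0 δ := by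
      rw [mem_closedBall_zero_iff, norm_smul, norm_neg, Real.norm_of_nonneg (by positivity),
        div_mul_cancel₀ _ (norm_ne_zero_iff.mpr hp)]
    have hwp : -⟪w, p⟫ = δ * ‖p‖ := by
      rw [real_inner_smul_left, real_inner_self_eq_norm_sq]
      field_simp
    exact hwp ▸ hhalf (hclosedBall hw)
  · intro h w hw
    by_contra hw'
    obtain ⟨f, u, hfu, hfw⟩ :=
      geometric_hahn_banach_closed_point (convex_convexHull ℝ _) hv.isClosed hw'
    set q : E := (InnerProductSpace.toDual ℝ E).symm f
    have hq : ∀ y, ⟪q, y⟫ = f y := fun y => InnerProductSpace.toDual_symm_apply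
    have hsupp : ⨆ i, -⟪v i, -q⟫ ≤ u := ciSup_le fun i => by
      rw [inner_neg_right, neg_neg, real_inner_comm, hq]
      exact (hfu _ (subset_convexHull ℝ _ ⟨i, rfl⟩)).le
    have hfw' : f w ≤ δ * ‖q‖ := by
      rw [← hq, mul_comm]
      exact (real_inner_le_norm q w).trans
        (mul_le_mul_of_nonneg_left (mem_ball_zero_iff.mp hw).le (norm_nonneg q))
    have hsupp_ge := h (-q)
    rw [norm_neg] at hsupp_ge
    linarith

end SupportFunction

theorem abs_ciSup_sub_ciSup_le {ι : Type*} [Nonempty ι] {f h : ι → ℝ} (hf : BddAbove (range f))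
    (hh : BddAbove (range h)) {C : ℝ} (hC : ∀ i, |f i - h i| ≤ C) :
    |(⨆ i, f i) - ⨆ i, h i| ≤ C := by
  rw [abs_sub_le_iff, sub_le_iff_le_add, sub_le_iff_le_add]
  constructor
  · exact ciSup_le fun i => by linarith [(abs_sub_le_iff.mp (hC i)).1, le_ciSup hh i]
  · exact ciSup_le fun i => by linarith [(abs_sub_le_iff.mp (hC i)).2, le_ciSup hf i]

section UniformlyCoercive

variable {X E : Type*}

def UniformlyCoercive [Norm E] (F : X → E → ℝ) : Prop :=
  ∀ M : ℝ, ∃ R : ℝ, ∀ a p, R ≤ ‖p‖ → M ≤ F a p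

theorem UniformlyCoercive.of_le_add [Norm E] {F G : X → E → ℝ} (hF : UniformlyCoercive F) {C : ℝ}
    (h : ∀ a p, F a p ≤ G a p + C) : UniformlyCoercive G := fun M =>
  (hF (M + C)).imp fun _ hR a p hp => by linarith [hR a p hp, h a p]

theorem uniformlyCoercive_congr_of_abs_sub_le [Norm E] {F G : X → E → ℝ} {C : ℝ}
    (h : ∀ a p, |F a p - G a p| ≤ C) : UniformlyCoercive F ↔ UniformlyCoercive G :=
  ⟨fun hF => hF.of_le_add fun a p => by linarith [(abs_sub_le_iff.mp (h a p)).1],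
    fun hG => hG.of_le_add fun a p => by linarith [(abs_sub_le_iff.mp (h a p)).2]⟩

theorem uniformlyCoercive_iff_exists_mul_norm_le [NormedAddCommGroup E] [NormedSpace ℝ E]
    {σ : X → E → ℝ} (hσ : ∀ a p {t : ℝ}, 0 ≤ t → σ a (t • p) = t * σ a p) :
    UniformlyCoercive σ ↔ ∃ δ, 0 < δ ∧ ∀ a p, δ * ‖p‖ ≤ σ a p := by
  constructor
  · intro h
    obtain ⟨R, hR⟩ := h 1
    set R' := max R 1
    have hR' : 0 < R' := lt_max_of_lt_right one_pos
    refine ⟨R'⁻¹, inv_pos.mpr hR', fun a p => ?_⟩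
    rcases eq_or_ne p 0 with rfl | hp
    · simpa using (hσ a 0 le_rfl).ge
    have hnorm : 0 < ‖p‖ := norm_pos_iff.mpr hp
    have h1 := hR a ((R' / ‖p‖) • p) <| by
      rw [norm_smul, Real.norm_of_nonneg (by positivity), div_mul_cancel₀ _ hnorm.ne']
      exact le_max_left _ _
    rw [hσ a p (by positivity), div_mul_eq_mul_div, one_le_div hnorm] at h1
    rw [inv_mul_le_iff₀ hR']
    linarith
  · rintro ⟨δ, hδ, h⟩ M
    refine ⟨M / δ, fun a p hp => ?_⟩
    calc M = δ * (M / δ) := by field_simp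
      _ ≤ δ * ‖p‖ := by gcongr
      _ ≤ σ a p := h a p

end UniformlyCoercive

theorem TorusFun2.exists_norm_le {n : ℕ} {Ξ α : Type*} [TopologicalSpace Ξ] [CompactSpace Ξ]
    [SeminormedAddGroup α] {f : Euc n × Ξ → α} (hper : TorusFun2 f) (hcont : Continuous f) :
    ∃ C, ∀ x ξ, ‖f (x, ξ)‖ ≤ C := by
  have hK : IsCompact ((WithLp.toLp 2 '' univ.pi fun _ => Icc (0 : ℝ) 1 : Set (Euc n)) ×ˢ
      (univ : Set Ξ)) :=
    ((isCompact_univ_pi fun _ => isCompact_Icc).image (PiLp.continuous_toLp 2 _)).prod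
      isCompact_univ
  obtain ⟨C, hC⟩ := hK.exists_bound_of_continuousOn hcont.continuousOn
  refine ⟨C, fun x ξ => ?_⟩
  have hx : x =
      WithLp.toLp 2 (fun j => Int.fract (x j)) + WithLp.toLp 2 (fun j => (⌊x j⌋ : ℝ)) := by
    ext j
    simp [Int.fract_add_floor]
  rw [hx, hper _ _ _ fun j => ⟨⌊x j⌋, rfl⟩]
  exact hC _ ⟨⟨_, fun j _ => ⟨Int.fract_nonneg _, (Int.fract_lt_one _).le⟩, rfl⟩, trivial⟩

theorem coercive_iff_uniformlyCoercive {n m : ℕ} {Ξ : Type*} (g : Fin m → Euc n × Ξ → Euc n)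
    (L : Fin m → Euc n × Ξ → ℝ) :
    Coercive g L ↔ UniformlyCoercive fun a : Euc n × Fin m => ham g L a.2 a.1 := by
  constructor
  · intro h M
    choose R hR using fun i => h i M
    obtain ⟨R₀, hR₀⟩ := Finite.exists_le R
    exact ⟨R₀, fun a p hp => hR a.2 p ((hR₀ a.2).trans hp) a.1⟩
  · intro h i M
    obtain ⟨R, hR⟩ := h M
    exact ⟨R, fun p hp x => hR (x, i) p hp⟩

theorem stmt0_general {n m : ℕ}
    {Ξ : Type*} [MetricSpace Ξ] [CompactSpace Ξ] [Nonempty Ξ]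
    (g : Fin m → Euc n × Ξ → Euc n) (L : Fin m → Euc n × Ξ → ℝ)
    (hgL : GoodData g L) :
    Coercive g L ↔
      ∃ δ : ℝ, 0 < δ ∧ ∀ (x : Euc n) (i : Fin m),
        Metric.ball (0 : Euc n) δ ⊆ convexHull ℝ (Set.range fun ξ : Ξ => g i (x, ξ)) := by
  obtain ⟨hg, hL⟩ := hgL
  have hhull (i : Fin m) (x : Euc n) : IsCompact (convexHull ℝ (range fun ξ : Ξ => g i (x, ξ))) :=
    isCompact_convexHull (isCompact_range ((hg i).1.comp (Continuous.prodMk_right x)))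
  obtain ⟨C, hC⟩ : ∃ C, ∀ i x ξ, ‖L i (x, ξ)‖ ≤ C := by
    choose C hC using fun i => (hL i).2.exists_norm_le (hL i).1
    obtain ⟨C₀, hC₀⟩ := Finite.exists_le C
    exact ⟨C₀, fun i x ξ => (hC i x ξ).trans (hC₀ i)⟩
  have hham (a : Euc n × Fin m) (p : Euc n) :
      |ham g L a.2 a.1 p - ⨆ ξ, -⟪g a.2 (a.1, ξ), p⟫| ≤ C := by
    refine abs_ciSup_sub_ciSup_le ?_ (bddAbove_range_neg_inner (hhull a.2 a.1) p) fun ξ => ?_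
    · have hgc := (hg a.2).1
      have hLc := (hL a.2).1
      exact (isCompact_range (by fun_prop)).bddAbove
    · rw [sub_sub_cancel_left, abs_neg]
      exact hC a.2 a.1 ξ
  rw [coercive_iff_uniformlyCoercive, uniformlyCoercive_congr_of_abs_sub_le hham,
    uniformlyCoercive_iff_exists_mul_norm_le fun a p _ ht => iSup_neg_inner_smul _ p ht]
  refine exists_congr fun δ => and_congr_right fun hδ => ?_
  simp only [Prod.forall, ball_subset_convexHull_range_iff (hhull _ _) hδ]

theorem stmt0 {n m : ℕ} (hn : 0 < n) (hm : 0 < m)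
    {Ξ : Type*} [MetricSpace Ξ] [CompactSpace Ξ] [Nonempty Ξ]
    (g : Fin m → Euc n × Ξ → Euc n) (L : Fin m → Euc n × Ξ → ℝ)
    (hgL : GoodData g L) :
    Coercive g L ↔
      ∃ δ : ℝ, 0 < δ ∧ ∀ (x : Euc n) (i : Fin m),
        Metric.ball (0 : Euc n) δ ⊆ convexHull ℝ (Set.range fun ξ : Ξ => g i (x, ξ)) :=
  stmt0_general g L hgL
end

section
/- A real m×m matrix B = (b_{ij})_{i,j∈𝕀} is monotone if and only if b_{ij} ≤ 0 whenever i ≠ j and Σ_{j∈𝕀} b_{ij} ≥ 0 for every i ∈ 𝕀. -/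
open MeasureTheory Filter Topology RealInnerProductSpace

theorem stmt1 {m : ℕ} (hm : 0 < m) (B : Matrix (Fin m) (Fin m) ℝ) :
    IsMonotoneMat B ↔
      ((∀ i j, i ≠ j → B i j ≤ 0) ∧ ∀ i, 0 ≤ ∑ j, B i j) := by
  constructor
  · intro hB
    constructor
    · intro i j hij
      have h := hB (fun l => if l = j then -1 else 0) i
        (by intro l; by_cases hl : l = j <;> simp [hl, if_neg hij]) (by simp [if_neg hij])
      simp only [mul_ite, mul_neg, mul_one, mul_zero] at h
      rw [Finset.sum_ite_eq' Finset.univ j] at h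
      simp at h
      linarith
    · intro i
      have h := hB (fun _ => 1) i (fun _ => le_refl 1) zero_le_one
      simpa using h
  · rintro ⟨hoff, hrow⟩ u k hmax hk
    have : ∑ j, B k j * u j =
        (∑ j, B k j) * u k + ∑ j, B k j * (u j - u k) := by
      rw [Finset.sum_mul, ← Finset.sum_add_distrib]
      congr 1; ext j; ring
    rw [this]
    have h1 : 0 ≤ (∑ j, B k j) * u k := mul_nonneg (hrow k) hk
    have h2 : 0 ≤ ∑ j, B k j * (u j - u k) := by
      apply Finset.sum_nonneg
      intro j _
      by_cases hj : j = k
      · simp [hj]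
      · exact mul_nonneg_of_nonpos_of_nonpos (hoff k j (Ne.symm hj)) (by linarith [hmax j])
    linarith
end

section
/- Assume the coercivity condition (C), the monotonicity assumption (M) and assumption (E). For λ > 0 let v^λ = (v^λ_i)_{i∈𝕀} be the unique viscosity solution of (P_λ). Then there exists a constant C₀ > 0 such that |v^λ_i(x)| ≤ C₀ for every λ > 0, every x ∈ 𝕋ⁿ and every i ∈ 𝕀. -/
open MeasureTheory Filter Topology RealInnerProductSpace

/-!
The rows of a monotone matrix have nonnegative sums, so if `|v₀| ≤ C` then `v₀ + C` and
`v₀ - C` are a viscosity supersolution and a subsolution of `(P_λ)` for every `λ > 0`. A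
comparison principle for `(P_λ)` traps `v^λ` between them, whence `|v^λ| ≤ 2 C`.

The comparison principle is proved by doubling the variables with the smooth periodic penalty
`α ∑ⱼ sin² (π (xⱼ - yⱼ)) / π²`. Since one of the two functions compared is Lipschitz, at a
maximum point `(a, b)` the distance `|a - b|` is `O(1 / α)` while the gradient of the penalty
stays bounded; this is what makes the mere uniform continuity of `g`, `L` and `B` in `x` enough
to compare the Hamiltonians and the coupling terms at `a` and `b`.
-/

open Real

/-- A smooth `1`-periodic substitute for `t ^ 2`; it equals `sin (π t) ^ 2 / π ^ 2`. -/
noncomputable def periodicSq (t : ℝ) : ℝ := (1 - cos (2 * π * t)) / (2 * π ^ 2)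

lemma periodicSq_zero : periodicSq 0 = 0 := by simp [periodicSq]

lemma periodicSq_neg (t : ℝ) : periodicSq (-t) = periodicSq t := by
  simp [periodicSq, mul_neg, cos_neg]

lemma periodicSq_nonneg (t : ℝ) : 0 ≤ periodicSq t :=
  div_nonneg (by linarith [cos_le_one (2 * π * t)]) (by positivity)

lemma periodicSq_add_intCast (t : ℝ) (k : ℤ) : periodicSq (t + k) = periodicSq t := by
  rw [periodicSq, show 2 * π * (t + k) = 2 * π * t + k * (2 * π) by ring,
    cos_add_int_mul_two_pi, periodicSq]

lemma periodicSq_eq_sin_sq (t : ℝ) : periodicSq t = sin (π * t) ^ 2 / π ^ 2 := by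
  rw [periodicSq, show 2 * π * t = 2 * (π * t) by ring, cos_two_mul, cos_sq']
  field_simp
  ring

lemma mul_sq_le_periodicSq {t : ℝ} (ht : |t| ≤ 1 / 2) : 4 / π ^ 2 * t ^ 2 ≤ periodicSq t := by
  have hjordan : 2 * |t| ≤ sin (π * |t|) := by
    have := mul_le_sin (x := π * |t|) (by positivity) (by nlinarith [abs_nonneg t, pi_pos])
    rwa [div_mul_eq_mul_div, mul_div_assoc, mul_div_cancel_left₀ _ pi_ne_zero] at this
  have hsin : sin (π * |t|) ^ 2 = sin (π * t) ^ 2 := by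
    rcases abs_choice t with h | h <;> simp [h, mul_neg, sin_neg]
  rw [periodicSq_eq_sin_sq, ← hsin, div_mul_eq_mul_div, div_le_div_iff_of_pos_right (by positivity)]
  nlinarith [abs_nonneg t, sq_abs t]

lemma hasDerivAt_periodicSq (t : ℝ) : HasDerivAt periodicSq (sin (2 * π * t) / π) t := by
  have h := (((hasDerivAt_id t).const_mul (2 * π)).cos.const_sub 1).div_const (2 * π ^ 2)
  refine h.congr_deriv ?_
  field_simp
  simp

lemma contDiff_periodicSq : ContDiff ℝ 1 periodicSq :=
  (contDiff_const.sub (contDiff_cos.comp (contDiff_const.mul contDiff_id))).div_const _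

lemma abs_sin_two_pi_mul_div_pi_le (t : ℝ) : |sin (2 * π * t) / π| ≤ 2 * |t| := by
  rw [abs_div, abs_of_pos pi_pos, div_le_iff₀ pi_pos]
  calc |sin (2 * π * t)| ≤ |2 * π * t| := abs_sin_le_abs
    _ = 2 * |t| * π := by rw [abs_mul, abs_mul, abs_of_pos pi_pos, abs_two]; ring

lemma exists_forall_le_of_isCompact {X : Type*} [TopologicalSpace X] [Nonempty X] {f : X → ℝ}
    (hf : Continuous f) {S : Set X} (hS : IsCompact S) (hdom : ∀ x, ∃ y ∈ S, f y = f x) :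
    ∃ a, ∀ x, f x ≤ f a := by
  obtain ⟨y, hy, -⟩ := hdom (Classical.arbitrary X)
  obtain ⟨a, -, ha⟩ := hS.exists_isMaxOn ⟨y, hy⟩ hf.continuousOn
  refine ⟨a, fun x => ?_⟩
  obtain ⟨y, hy, hyx⟩ := hdom x
  exact hyx ▸ ha hy

section

variable {n : ℕ}

lemma IsIntVec.sub {z z' : Euc n} (hz : IsIntVec z) (hz' : IsIntVec z') : IsIntVec (z - z') :=
  fun j => by
    obtain ⟨k, hk⟩ := hz j
    obtain ⟨k', hk'⟩ := hz' j
    exact ⟨k - k', by simp [hk, hk']⟩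

lemma norm_le_sqrt_mul_of_forall_abs_le {y : Euc n} {r : ℝ} (hr : 0 ≤ r) (h : ∀ j, |y j| ≤ r) :
    ‖y‖ ≤ √n * r := by
  rw [← sqrt_sq (norm_nonneg y), ← sqrt_sq hr, ← sqrt_mul (Nat.cast_nonneg n)]
  refine sqrt_le_sqrt ?_
  rw [EuclideanSpace.real_norm_sq_eq]
  calc ∑ j, y j ^ 2 ≤ ∑ _j : Fin n, r ^ 2 := Finset.sum_le_sum fun j _ => by
        rw [← sq_abs]; gcongr; exact h j
    _ = n * r ^ 2 := by simp

lemma exists_isIntVec_add_mem_closedBall (x : Euc n) :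
    ∃ z : Euc n, IsIntVec z ∧ x + z ∈ Metric.closedBall 0 √n := by
  refine ⟨WithLp.toLp 2 fun j => -(⌊x j⌋ : ℝ), fun j => ⟨-⌊x j⌋, by simp⟩, ?_⟩
  rw [mem_closedBall_zero_iff, ← mul_one √n]
  refine norm_le_sqrt_mul_of_forall_abs_le zero_le_one fun j => ?_
  have : (x + WithLp.toLp 2 fun j => -(⌊x j⌋ : ℝ)) j = Int.fract (x j) := by
    simp [Int.fract, sub_eq_add_neg]
  rw [this, abs_of_nonneg (Int.fract_nonneg _)]
  exact (Int.fract_lt_one _).le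

lemma exists_isIntVec_abs_sub_le_half (x y : Euc n) :
    ∃ z : Euc n, IsIntVec z ∧ ∀ j, |x j - (y + z) j| ≤ 1 / 2 := by
  refine ⟨WithLp.toLp 2 fun j => (round (x j - y j) : ℝ), fun j => ⟨_, rfl⟩, fun j => ?_⟩
  simpa [sub_add_eq_sub_sub] using abs_sub_round (x j - y j)

lemma exists_forall_abs_le_of_torusFun {m : ℕ} {u : Fin m → Euc n → ℝ}
    (hc : ∀ i, Continuous (u i)) (hp : ∀ i, TorusFun (u i)) :
    ∃ C, 0 ≤ C ∧ ∀ i x, |u i x| ≤ C := by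
  obtain ⟨C, hC⟩ := (isCompact_closedBall (0 : Euc n) √n).exists_bound_of_continuousOn
    (continuous_pi fun i => hc i).continuousOn
  refine ⟨max C 0, le_max_right _ _, fun i x => ?_⟩
  obtain ⟨z, hz, hxz⟩ := exists_isIntVec_add_mem_closedBall x
  rw [← hp i x z hz]
  exact (norm_le_pi_norm (fun i => u i (x + z)) i).trans ((hC _ hxz).trans (le_max_left _ _))

lemma exists_forall_dist_lt_of_torusFun2 {Y E ι : Type*} [PseudoMetricSpace Y] [CompactSpace Y]
    [PseudoMetricSpace E] [Fintype ι] {f : ι → Euc n × Y → E} (hc : ∀ i, Continuous (f i))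
    (hp : ∀ i, TorusFun2 (f i)) {ε : ℝ} (hε : 0 < ε) :
    ∃ δ > 0, ∀ a b : Euc n, dist a b < δ → ∀ i y, dist (f i (a, y)) (f i (b, y)) < ε := by
  have hS := (isCompact_closedBall (0 : Euc n) (√n + 1)).prod (isCompact_univ (X := Y))
  obtain ⟨δ, hδ, hmod⟩ := Metric.uniformContinuousOn_iff.mp
    (hS.uniformContinuousOn_of_continuous (continuous_pi fun i => hc i).continuousOn) ε hε
  refine ⟨min δ 1, by positivity, fun a b hab i y => ?_⟩
  obtain ⟨z, hz, haz⟩ := exists_isIntVec_add_mem_closedBall a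
  have hbz : b + z ∈ Metric.closedBall 0 (√n + 1) := by
    rw [Metric.mem_closedBall] at haz ⊢
    calc dist (b + z) 0 ≤ dist (b + z) (a + z) + dist (a + z) 0 := dist_triangle _ _ _
      _ ≤ √n + 1 := by
        rw [dist_add_right, dist_comm]
        linarith [hab.trans_le (min_le_right δ 1)]
  have haz' : (a + z, y) ∈ Metric.closedBall 0 (√n + 1) ×ˢ Set.univ :=
    ⟨Metric.closedBall_subset_closedBall (by linarith) haz, trivial⟩
  have hdist : dist (a + z, y) (b + z, y) < δ := by
    rw [Prod.dist_eq, dist_self, dist_add_right]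
    exact max_lt (hab.trans_le (min_le_left δ 1)) hδ
  rw [← hp i a z y hz, ← hp i b z y hz]
  exact (dist_le_pi_dist (fun i => f i (a + z, y)) (fun i => f i (b + z, y)) i).trans_lt
    (hmod _ haz' _ ⟨hbz, trivial⟩ hdist)

noncomputable def periodicNormSq (d : Euc n) : ℝ := ∑ j, periodicSq (d j)

noncomputable def periodicNormSqGrad (d : Euc n) : Euc n :=
  WithLp.toLp 2 fun j => sin (2 * π * d j) / π

lemma periodicNormSq_nonneg (d : Euc n) : 0 ≤ periodicNormSq d :=
  Finset.sum_nonneg fun j _ => periodicSq_nonneg (d j)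

lemma periodicNormSq_zero : periodicNormSq (0 : Euc n) = 0 := by
  simp [periodicNormSq, periodicSq_zero]

lemma periodicNormSq_neg (d : Euc n) : periodicNormSq (-d) = periodicNormSq d := by
  simp [periodicNormSq, periodicSq_neg]

lemma periodicNormSq_add_of_isIntVec (d : Euc n) {z : Euc n} (hz : IsIntVec z) :
    periodicNormSq (d + z) = periodicNormSq d := by
  refine Finset.sum_congr rfl fun j _ => ?_
  obtain ⟨k, hk⟩ := hz j
  simp only [PiLp.add_apply, hk, periodicSq_add_intCast]

lemma contDiff_periodicNormSq : ContDiff ℝ 1 (periodicNormSq : Euc n → ℝ) :=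
  ContDiff.sum fun j _ => contDiff_periodicSq.comp (EuclideanSpace.proj j : Euc n →L[ℝ] ℝ).contDiff

lemma hasGradientAt_periodicNormSq (d : Euc n) :
    HasGradientAt periodicNormSq (periodicNormSqGrad d) d := by
  rw [hasGradientAt_iff_hasFDerivAt]
  have hsum := HasFDerivAt.fun_sum (u := Finset.univ) fun j _ =>
    (hasDerivAt_periodicSq (d j)).comp_hasFDerivAt d
      (EuclideanSpace.proj j : Euc n →L[ℝ] ℝ).hasFDerivAt
  refine hsum.congr_fderiv (ContinuousLinearMap.ext fun e => ?_)
  simp [periodicNormSqGrad, PiLp.inner_apply, mul_comm]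

lemma periodicNormSqGrad_neg (d : Euc n) : periodicNormSqGrad (-d) = -periodicNormSqGrad d := by
  ext j
  simp [periodicNormSqGrad, mul_neg, sin_neg, neg_div]

lemma norm_periodicNormSqGrad_le (d : Euc n) : ‖periodicNormSqGrad d‖ ≤ 2 * ‖d‖ := by
  refine le_of_sq_le_sq ?_ (by positivity)
  rw [mul_pow, EuclideanSpace.real_norm_sq_eq, EuclideanSpace.real_norm_sq_eq, Finset.mul_sum]
  refine Finset.sum_le_sum fun j _ => ?_
  have h := abs_sin_two_pi_mul_div_pi_le (d j)
  calc (sin (2 * π * d j) / π) ^ 2 ≤ (2 * |d j|) ^ 2 := by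
        rw [← sq_abs]; gcongr
    _ = 2 ^ 2 * d j ^ 2 := by rw [mul_pow, sq_abs]

lemma mul_norm_sq_le_periodicNormSq {d : Euc n} (hd : ∀ j, |d j| ≤ 1 / 2) :
    4 / π ^ 2 * ‖d‖ ^ 2 ≤ periodicNormSq d := by
  rw [EuclideanSpace.real_norm_sq_eq, Finset.mul_sum]
  exact Finset.sum_le_sum fun j _ => mul_sq_le_periodicSq (hd j)

lemma norm_le_of_mul_periodicNormSq_le {d : Euc n} (hd : ∀ j, |d j| ≤ 1 / 2) {α K : ℝ}
    (hα : 0 < α) (hK : 0 ≤ K) (h : α * periodicNormSq d ≤ K * ‖d‖) :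
    ‖d‖ ≤ π ^ 2 * K / (4 * α) := by
  rw [le_div_iff₀ (by positivity)]
  rcases (norm_nonneg d).eq_or_lt with h0 | hpos
  · rw [← h0, zero_mul]; positivity
  have key : α * (4 / π ^ 2 * ‖d‖ ^ 2) ≤ K * ‖d‖ :=
    (mul_le_mul_of_nonneg_left (mul_norm_sq_le_periodicNormSq hd) hα.le).trans h
  have : ‖d‖ * (4 * α) * ‖d‖ ≤ π ^ 2 * K * ‖d‖ := by
    have hpi : 0 < π ^ 2 := by positivity
    field_simp at key
    nlinarith
  exact le_of_mul_le_mul_right this hpos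

lemma torusFun_penalty (α : ℝ) (c : Euc n) :
    TorusFun fun y : Euc n => α * periodicNormSq (y - c) := fun y z hz => by
  simp only [add_sub_right_comm, periodicNormSq_add_of_isIntVec _ hz]

lemma contDiff_penalty (α : ℝ) (c : Euc n) :
    ContDiff ℝ 1 fun y : Euc n => α * periodicNormSq (y - c) :=
  contDiff_const.mul (contDiff_periodicNormSq.comp (contDiff_id.sub contDiff_const))

lemma gradient_penalty (α : ℝ) (c x : Euc n) :
    gradient (fun y : Euc n => α * periodicNormSq (y - c)) x = α • periodicNormSqGrad (x - c) := by
  refine HasGradientAt.gradient ?_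
  rw [hasGradientAt_iff_hasFDerivAt, map_smul]
  have h := (hasGradientAt_iff_hasFDerivAt.mp (hasGradientAt_periodicNormSq (x - c))).comp x
    ((hasFDerivAt_id x).sub_const c)
  exact h.const_mul α

section Hamiltonian

variable {m : ℕ} {Ξ : Type*} {g : Fin m → Euc n × Ξ → Euc n} {L : Fin m → Euc n × Ξ → ℝ}

lemma le_ham [TopologicalSpace Ξ] [CompactSpace Ξ] (hg : ∀ i, Continuous (g i))
    (hL : ∀ i, Continuous (L i)) (i : Fin m) (x p : Euc n) (ξ : Ξ) :
    -⟪g i (x, ξ), p⟫ - L i (x, ξ) ≤ ham g L i x p := by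
  have hcont : Continuous fun ξ : Ξ => -⟪g i (x, ξ), p⟫ - L i (x, ξ) :=
    (((hg i).comp (Continuous.prodMk_right x)).inner continuous_const).neg.sub
      ((hL i).comp (Continuous.prodMk_right x))
  exact le_ciSup (isCompact_range hcont).bddAbove ξ

lemma ham_le_ham_add [TopologicalSpace Ξ] [CompactSpace Ξ] [Nonempty Ξ]
    (hg : ∀ i, Continuous (g i)) (hL : ∀ i, Continuous (L i)) (i : Fin m) (a b p : Euc n)
    {εg εL : ℝ} (hεg : ∀ ξ, ‖g i (a, ξ) - g i (b, ξ)‖ ≤ εg)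
    (hεL : ∀ ξ, |L i (a, ξ) - L i (b, ξ)| ≤ εL) :
    ham g L i a p ≤ ham g L i b p + εg * ‖p‖ + εL := by
  refine ciSup_le fun ξ => ?_
  have hinner : ⟪g i (b, ξ) - g i (a, ξ), p⟫ ≤ εg * ‖p‖ :=
    (real_inner_le_norm _ _).trans (by rw [norm_sub_rev]; gcongr; exact hεg ξ)
  have hL' := (abs_le.mp (hεL ξ)).1
  have hb := le_ham hg hL i b p ξ
  rw [inner_sub_left] at hinner
  linarith

lemma exists_ham_modulus [MetricSpace Ξ] [CompactSpace Ξ] [Nonempty Ξ] (hgL : GoodData g L)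
    {R η : ℝ} (hR : 0 ≤ R) (hη : 0 < η) :
    ∃ δ > 0, ∀ i a b p, dist a b < δ → ‖p‖ ≤ R → ham g L i a p ≤ ham g L i b p + η := by
  obtain ⟨δg, hδg, hg⟩ := exists_forall_dist_lt_of_torusFun2 (fun i => (hgL.1 i).1)
    (fun i => (hgL.1 i).2) (show 0 < η / (2 * (R + 1)) by positivity)
  obtain ⟨δL, hδL, hL⟩ := exists_forall_dist_lt_of_torusFun2 (fun i => (hgL.2 i).1)
    (fun i => (hgL.2 i).2) (half_pos hη)
  refine ⟨min δg δL, lt_min hδg hδL, fun i a b p hab hp => ?_⟩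
  have h := ham_le_ham_add (fun i => (hgL.1 i).1) (fun i => (hgL.2 i).1) i a b p
    (fun ξ => by rw [← dist_eq_norm]; exact (hg a b (hab.trans_le (min_le_left _ _)) i ξ).le)
    (fun ξ => (hL a b (hab.trans_le (min_le_right _ _)) i ξ).le)
  have hgp : η / (2 * (R + 1)) * ‖p‖ ≤ η / 2 := by
    rw [div_mul_eq_mul_div, div_le_div_iff₀ (by positivity) two_pos]
    nlinarith
  linarith

end Hamiltonian

lemma exists_coupling_modulus {m : ℕ} {B : Euc n → Matrix (Fin m) (Fin m) ℝ}
    (hB : GoodCoupling B) {C η : ℝ} (hC : 0 ≤ C) (hη : 0 < η) :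
    ∃ δ > 0, ∀ a b : Euc n, dist a b < δ → ∀ k (v : Fin m → ℝ), (∀ j, |v j| ≤ C) →
      ∑ j, B b k j * v j ≤ ∑ j, B a k j * v j + η := by
  -- `B` is seen as a function on `ℝⁿ × Unit`
  obtain ⟨δ, hδ, hmod⟩ := exists_forall_dist_lt_of_torusFun2 (Y := Unit)
    (f := fun (ij : Fin m × Fin m) q => B q.1 ij.1 ij.2)
    (fun ij => (hB.1 ij.1 ij.2).1.comp continuous_fst)
    (fun ij x z _ hz => (hB.1 ij.1 ij.2).2 x z hz) (show 0 < η / (m * C + 1) by positivity)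
  refine ⟨δ, hδ, fun a b hab k v hv => ?_⟩
  have hentry : ∀ j, (B b k j - B a k j) * v j ≤ η / (m * C + 1) * C := fun j =>
    (le_abs_self _).trans <| by
      rw [abs_mul, ← Real.dist_eq, dist_comm]
      exact mul_le_mul (hmod a b hab (k, j) ()).le (hv j) (abs_nonneg _) (by positivity)
  have hsum : ∑ j, (B b k j - B a k j) * v j ≤ η := by
    refine (Finset.sum_le_sum fun j _ => hentry j).trans ?_
    rw [Finset.sum_const, Finset.card_univ, Fintype.card_fin, nsmul_eq_mul,
      show (m : ℝ) * (η / (m * C + 1) * C) = η * (m * C / (m * C + 1)) by ring]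
    exact mul_le_of_le_one_right hη.le (div_le_one_of_le₀ (by linarith) (by positivity))
  simp only [sub_mul, Finset.sum_sub_distrib] at hsum
  linarith

lemma IsMonotoneMat.sum_row_nonneg {m : ℕ} {A : Matrix (Fin m) (Fin m) ℝ} (hA : IsMonotoneMat A)
    (k : Fin m) : 0 ≤ ∑ j, A k j := by
  simpa using hA (fun _ => 1) k (fun _ => le_rfl) zero_le_one

section Viscosity

variable {m : ℕ} {Ξ : Type*} {B : Euc n → Matrix (Fin m) (Fin m) ℝ} {lam : ℝ}
  {g : Fin m → Euc n × Ξ → Euc n} {φ : Fin m → Euc n × Ξ → ℝ} {c : Fin m → ℝ}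

lemma IsSubsol.sub_const {v : Fin m → Euc n → ℝ} (hv : IsSubsol B 0 g φ c v)
    (hB : ∀ x, IsMonotoneMat (B x)) (hlam : 0 ≤ lam) {C : ℝ} (hC : 0 ≤ C)
    (hvC : ∀ i x, v i x ≤ C) : IsSubsol B lam g φ c fun i x => v i x - C := by
  refine ⟨fun i => ⟨(hv.1 i).1.add upperSemicontinuous_const, fun x z hz => by
    simp only [(hv.1 i).2 x z hz]⟩, fun i ψ hψ hψp x hmax => ?_⟩
  have h := hv.2 i ψ hψ hψp x (hmax.mono fun y hy => by simp only at hy ⊢; linarith)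
  have hρ := mul_le_mul_of_nonneg_left ((hB x).sum_row_nonneg i) hC
  have hlamv := mul_nonpos_of_nonneg_of_nonpos hlam (sub_nonpos.mpr (hvC i x))
  simp only [mul_sub, Finset.sum_sub_distrib, ← Finset.sum_mul, zero_mul] at h ⊢
  linarith

lemma IsSupersol.add_const {v : Fin m → Euc n → ℝ} (hv : IsSupersol B 0 g φ c v)
    (hB : ∀ x, IsMonotoneMat (B x)) (hlam : 0 ≤ lam) {C : ℝ} (hC : 0 ≤ C)
    (hvC : ∀ i x, -C ≤ v i x) : IsSupersol B lam g φ c fun i x => v i x + C := by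
  refine ⟨fun i => ⟨(hv.1 i).1.add lowerSemicontinuous_const, fun x z hz => by
    simp only [(hv.1 i).2 x z hz]⟩, fun i ψ hψ hψp x hmin => ?_⟩
  have h := hv.2 i ψ hψ hψp x (hmin.mono fun y hy => by simp only at hy ⊢; linarith)
  have hρ := mul_le_mul_of_nonneg_left ((hB x).sum_row_nonneg i) hC
  have hlamv := mul_nonneg hlam (neg_le_iff_add_nonneg.mp (hvC i x))
  simp only [mul_add, Finset.sum_add_distrib, ← Finset.sum_mul, zero_mul] at h ⊢
  linarith

lemma IsSubsol.le_of_forall_sub_penalty_le {u : Fin m → Euc n → ℝ} (hu : IsSubsol B lam g φ c u)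
    {k : Fin m} {a b : Euc n} {α : ℝ}
    (hmax : ∀ x, u k x - α * periodicNormSq (x - b) ≤ u k a - α * periodicNormSq (a - b)) :
    lam * u k a + ∑ j, B a k j * u j a + ham g φ k a (α • periodicNormSqGrad (a - b)) ≤ c k := by
  have h := hu.2 k _ (contDiff_penalty α b) (torusFun_penalty α b) a (.of_forall hmax)
  rwa [gradient_penalty] at h

lemma IsSupersol.ge_of_forall_add_penalty_le {w : Fin m → Euc n → ℝ}
    (hw : IsSupersol B lam g φ c w) {k : Fin m} {a b : Euc n} {α : ℝ}
    (hmin : ∀ y, w k b + α * periodicNormSq (a - b) ≤ w k y + α * periodicNormSq (a - y)) :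
    c k ≤ lam * w k b + ∑ j, B b k j * w j b + ham g φ k b (α • periodicNormSqGrad (a - b)) := by
  have hsymm : ∀ y, periodicNormSq (y - a) = periodicNormSq (a - y) := fun y => by
    rw [← neg_sub, periodicNormSq_neg]
  have h := hw.2 k _ (contDiff_penalty (-α) a) (torusFun_penalty (-α) a) b
    (.of_forall fun y => by simp only [hsymm]; linarith [hmin y])
  rwa [gradient_penalty, ← neg_sub a b, periodicNormSqGrad_neg, neg_smul_neg] at h

end Viscosity

section Doubling

variable {m : ℕ} {u w : Fin m → Euc n → ℝ}

lemma exists_doubling_max [Nonempty (Fin m)] (huc : ∀ i, Continuous (u i))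
    (hwc : ∀ i, Continuous (w i)) (hup : ∀ i, TorusFun (u i)) (hwp : ∀ i, TorusFun (w i))
    (α : ℝ) :
    ∃ k a b, (∀ j, |a j - b j| ≤ 1 / 2) ∧ ∀ i x y,
      u i x - w i y - α * periodicNormSq (x - y) ≤ u k a - w k b - α * periodicNormSq (a - b) := by
  set Φ : Fin m × Euc n × Euc n → ℝ :=
    fun q => u q.1 q.2.1 - w q.1 q.2.2 - α * periodicNormSq (q.2.1 - q.2.2)
  have hΦ : Continuous Φ := continuous_prod_of_discrete_left.mpr fun i =>
    (((huc i).comp continuous_fst).sub ((hwc i).comp continuous_snd)).sub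
      (continuous_const.mul (contDiff_periodicNormSq.continuous.comp
        (continuous_fst.sub continuous_snd)))
  have hper : ∀ i x y zx zy, IsIntVec zx → IsIntVec zy → Φ (i, x + zx, y + zy) = Φ (i, x, y) :=
    fun i x y zx zy hzx hzy => by
      simp only [Φ, hup i x zx hzx, hwp i y zy hzy, add_sub_add_comm,
        periodicNormSq_add_of_isIntVec _ (hzx.sub hzy)]
  have hS := (isCompact_univ : IsCompact (Set.univ : Set (Fin m))).prod
    ((isCompact_closedBall (0 : Euc n) √n).prod (isCompact_closedBall (0 : Euc n) √n))
  obtain ⟨⟨k, a, b'⟩, hmax⟩ := exists_forall_le_of_isCompact hΦ hS fun ⟨i, x, y⟩ => by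
    obtain ⟨zx, hzx, hx⟩ := exists_isIntVec_add_mem_closedBall x
    obtain ⟨zy, hzy, hy⟩ := exists_isIntVec_add_mem_closedBall y
    exact ⟨(i, x + zx, y + zy), ⟨trivial, hx, hy⟩, hper i x y zx zy hzx hzy⟩
  obtain ⟨z, hz, hhalf⟩ := exists_isIntVec_abs_sub_le_half a b'
  have hshift : Φ (k, a, b' + z) = Φ (k, a, b') := by
    simpa using hper k a b' 0 z (fun _ => ⟨0, by simp⟩) hz
  exact ⟨k, a, b' + z, hhalf, fun i x y => (hmax (i, x, y)).trans_eq hshift.symm⟩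

lemma penalty_le_of_doubling_max {k : Fin m} {a b : Euc n} {α : ℝ} {K : NNReal}
    (hmax : ∀ i x y, u i x - w i y - α * periodicNormSq (x - y) ≤
      u k a - w k b - α * periodicNormSq (a - b))
    (hlip : (∀ i, LipschitzWith K (u i)) ∨ ∀ i, LipschitzWith K (w i)) :
    α * periodicNormSq (a - b) ≤ K * ‖a - b‖ := by
  rcases hlip with hlip | hlip
  · have h := hmax k b b
    have hu := (le_abs_self _).trans ((hlip k).dist_le_mul a b)
    rw [sub_self, periodicNormSq_zero, mul_zero, dist_eq_norm] at *
    linarith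
  · have h := hmax k a a
    have hw := (le_abs_self _).trans ((hlip k).dist_le_mul a b)
    rw [sub_self, periodicNormSq_zero, mul_zero, dist_eq_norm] at *
    linarith

lemma exists_doubling_max_near [Nonempty (Fin m)] (huc : ∀ i, Continuous (u i))
    (hwc : ∀ i, Continuous (w i)) (hup : ∀ i, TorusFun (u i)) (hwp : ∀ i, TorusFun (w i))
    {K : NNReal} (hlip : (∀ i, LipschitzWith K (u i)) ∨ ∀ i, LipschitzWith K (w i))
    {δ : ℝ} (hδ : 0 < δ) :
    ∃ k a b α, 0 < α ∧ (∀ i x y, u i x - w i y - α * periodicNormSq (x - y) ≤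
        u k a - w k b - α * periodicNormSq (a - b)) ∧
      dist a b < δ ∧ ‖α • periodicNormSqGrad (a - b)‖ ≤ π ^ 2 * K / 2 := by
  set α := (π ^ 2 * K + 1) / δ
  have hα : 0 < α := by positivity
  obtain ⟨k, a, b, hhalf, hmax⟩ := exists_doubling_max huc hwc hup hwp α
  have hab : ‖a - b‖ ≤ π ^ 2 * K / (4 * α) :=
    norm_le_of_mul_periodicNormSq_le (by simpa using hhalf) hα K.2
      (penalty_le_of_doubling_max hmax hlip)
  refine ⟨k, a, b, α, hα, hmax, ?_, ?_⟩
  · rw [dist_eq_norm]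
    refine hab.trans_lt ((div_lt_iff₀ (by positivity)).mpr ?_)
    have : δ * (4 * α) = 4 * (π ^ 2 * K + 1) := by rw [mul_left_comm, mul_div_cancel₀ _ hδ.ne']
    linarith [show 0 ≤ π ^ 2 * K by positivity]
  · calc ‖α • periodicNormSqGrad (a - b)‖ ≤ α * (2 * ‖a - b‖) := by
          rw [norm_smul, Real.norm_of_nonneg hα.le]
          exact mul_le_mul_of_nonneg_left (norm_periodicNormSqGrad_le _) hα.le
      _ ≤ α * (2 * (π ^ 2 * K / (4 * α))) := by gcongr
      _ = π ^ 2 * K / 2 := by field_simp; ring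

end Doubling

theorem IsSubsol.le_of_isSupersol {m : ℕ} {Ξ : Type*} [MetricSpace Ξ] [CompactSpace Ξ]
    [Nonempty Ξ] {B : Euc n → Matrix (Fin m) (Fin m) ℝ} {g : Fin m → Euc n × Ξ → Euc n}
    {L : Fin m → Euc n × Ξ → ℝ} {c : Fin m → ℝ} {lam : ℝ} {u w : Fin m → Euc n → ℝ}
    (hu : IsSubsol B lam g L c u) (hw : IsSupersol B lam g L c w) (hB : GoodCoupling B)
    (hgL : GoodData g L) (hlam : 0 < lam) (huc : ∀ i, Continuous (u i))
    (hwc : ∀ i, Continuous (w i)) {K : NNReal}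
    (hlip : (∀ i, LipschitzWith K (u i)) ∨ ∀ i, LipschitzWith K (w i)) (i : Fin m) (x : Euc n) :
    u i x ≤ w i x := by
  by_contra! hx
  have hs : 0 < lam * (u i x - w i x) / 4 := by nlinarith
  have : Nonempty (Fin m) := ⟨i⟩
  obtain ⟨C, hC0, hC⟩ := exists_forall_abs_le_of_torusFun hwc fun i => (hw.1 i).2
  obtain ⟨δB, hδB, hBmod⟩ := exists_coupling_modulus hB hC0 hs
  obtain ⟨δH, hδH, hHmod⟩ := exists_ham_modulus hgL (R := π ^ 2 * K / 2) (by positivity) hs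
  obtain ⟨k, a, b, α, hα, hmax, hab, hp⟩ := exists_doubling_max_near huc hwc
    (fun i => (hu.1 i).2) (fun i => (hw.1 i).2) hlip (lt_min hδB hδH)
  have hsub := hu.le_of_forall_sub_penalty_le (k := k) (a := a) (b := b) (α := α)
    fun y => by linarith [hmax k y b]
  have hsup := hw.ge_of_forall_add_penalty_le (k := k) (a := a) (b := b) (α := α)
    fun y => by linarith [hmax k a y]
  have hgap : u i x - w i x ≤ u k a - w k b := by
    have := hmax i x x
    rw [sub_self, periodicNormSq_zero] at this
    linarith [mul_nonneg hα.le (periodicNormSq_nonneg (a - b))]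
  -- `k` maximises `j ↦ u j a - w j b`, so the monotonicity of `B a` applies to this vector
  have hmono := hB.2 a (fun j => u j a - w j b) k (fun j => by linarith [hmax j a b])
    (by linarith)
  have hBw := hBmod a b (hab.trans_le (min_le_left _ _)) k (fun j => w j b) fun j => hC j b
  have hH := hHmod k b a _ (by rw [dist_comm]; exact hab.trans_le (min_le_right _ _)) hp
  simp only [mul_sub, Finset.sum_sub_distrib] at hmono
  linarith [mul_le_mul_of_nonneg_left hgap hlam.le]

end

theorem stmt14_general {n m : ℕ}
    {Ξ : Type*} [MetricSpace Ξ] [CompactSpace Ξ] [Nonempty Ξ]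
    (g : Fin m → Euc n × Ξ → Euc n) (L : Fin m → Euc n × Ξ → ℝ)
    (hgL : GoodData g L)
    (B : Euc n → Matrix (Fin m) (Fin m) ℝ) (hB : GoodCoupling B)
    (hE : AssumptionE B g L)
    (v : ℝ → Fin m → Euc n → ℝ)
    (hv : ∀ lam : ℝ, 0 < lam → IsSol B lam g L (fun _ => 0) (v lam)) :
    ∃ C0 : ℝ, 0 < C0 ∧ ∀ lam : ℝ, 0 < lam →
      ∀ (x : Euc n) (i : Fin m), |v lam i x| ≤ C0 := by
  obtain ⟨v₀, hv₀lip, hv₀c, hv₀sub, hv₀sup⟩ := hE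
  choose K hK using hv₀lip
  have hlip : ∀ i, LipschitzWith (Finset.univ.sup K) (v₀ i) := fun i =>
    (hK i).weaken (Finset.le_sup (Finset.mem_univ i))
  obtain ⟨C, hC0, hC⟩ := exists_forall_abs_le_of_torusFun hv₀c fun i => (hv₀sub.1 i).2
  refine ⟨2 * C + 1, by positivity, fun lam hlam x i => ?_⟩
  obtain ⟨hvc, hvsub, hvsup⟩ := hv lam hlam
  have hupper := hvsub.le_of_isSupersol
    (hv₀sup.add_const hB.2 hlam.le hC0 fun i x => (abs_le.mp (hC i x)).1) hB hgL hlam hvc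
    (fun i => (hv₀c i).add continuous_const)
    (.inr fun i => by simpa using (hlip i).add (LipschitzWith.const C)) i x
  have hlower := (hv₀sub.sub_const hB.2 hlam.le hC0 fun i x => (abs_le.mp (hC i x)).2)
    |>.le_of_isSupersol hvsup hB hgL hlam (fun i => (hv₀c i).sub continuous_const) hvc
    (.inl fun i => by simpa using (hlip i).sub (LipschitzWith.const C)) i x
  have hv₀x := abs_le.mp (hC i x)
  rw [abs_le]
  constructor <;> linarith

theorem stmt14 {n m : ℕ} (hn : 0 < n) (hm : 0 < m)
    {Ξ : Type*} [MetricSpace Ξ] [CompactSpace Ξ] [Nonempty Ξ]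
    (g : Fin m → Euc n × Ξ → Euc n) (L : Fin m → Euc n × Ξ → ℝ)
    (hgL : GoodData g L) (hcoer : Coercive g L)
    (B : Euc n → Matrix (Fin m) (Fin m) ℝ) (hB : GoodCoupling B)
    (hE : AssumptionE B g L)
    (v : ℝ → Fin m → Euc n → ℝ)
    (hv : ∀ lam : ℝ, 0 < lam → IsSol B lam g L (fun _ => 0) (v lam)) :
    ∃ C0 : ℝ, 0 < C0 ∧ ∀ lam : ℝ, 0 < lam →
      ∀ (x : Euc n) (i : Fin m), |v lam i x| ≤ C0 :=
  stmt14_general g L hgL B hB hE v hv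
end
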